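/- For all n ≥ 0 and real x, x φ_{n,λ}(x) = ∑_{k=0}^{n} C(n,k) (λ-1)_{n-k,λ} φ_{k+1,λ}(x). -/

import Mathlib

open Finset

/-- Generalized falling factorial `(x)_{n,lam} = x(x-lam)...(x-(n-1)lam)`. -/
noncomputable def dfall (lam x : ℝ) (n : ℕ) : ℝ := ∏ i ∈ Finset.range n, (x - i * lam)

/-- Generalized rising factorial `⟨x⟩_{n,lam} = x(x+lam)...(x+(n-1)lam)`. -/
noncomputable def drise (lam x : ℝ) (n : ℕ) : ℝ := ∏ i ∈ Finset.range n, (x + i * lam)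

lemma dfall_succ (lam x : ℝ) (n : ℕ) :
    dfall lam x (n + 1) = dfall lam x n * (x - n * lam) := by
  simp [dfall, Finset.prod_range_succ]

lemma dfall_succ' (lam x : ℝ) (n : ℕ) :
    dfall lam x (n + 1) = x * dfall lam (x - lam) n := by
  rw [dfall, Finset.prod_range_succ']
  simp only [Nat.cast_zero, zero_mul, sub_zero, dfall]
  rw [mul_comm]
  congr 1
  apply Finset.prod_congr rfl
  intro i _
  push_cast
  ring

/-- Vandermonde convolution for the generalized falling factorial. -/
lemma dfall_vandermonde (lam x y : ℝ) (n : ℕ) :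
    dfall lam (x + y) n =
      ∑ k ∈ Finset.range (n + 1),
        (n.choose k : ℝ) * dfall lam x k * dfall lam y (n - k) := by
  induction n with
  | zero => simp [dfall]
  | succ n ih =>
      rw [dfall_succ, ih, Finset.sum_mul]
      have hsplit : ∀ k ∈ Finset.range (n + 1),
          (n.choose k : ℝ) * dfall lam x k * dfall lam y (n - k) * (x + y - n * lam)
          = ((n.choose k : ℝ) * dfall lam x (k + 1) * dfall lam y (n - k))
            + ((n.choose k : ℝ) * dfall lam x k * dfall lam y (n + 1 - k)) := by
        intro k hk
        rw [Finset.mem_range] at hk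
        have hnk : n + 1 - k = (n - k) + 1 := by omega
        rw [hnk, dfall_succ lam x k, dfall_succ lam y (n - k)]
        have : ((n - k : ℕ) : ℝ) = (n : ℝ) - (k : ℝ) := by
          rw [Nat.cast_sub (by omega)]
        rw [this]
        ring
      rw [Finset.sum_congr rfl hsplit, Finset.sum_add_distrib]
      set A := ∑ k ∈ Finset.range (n + 1),
        (n.choose k : ℝ) * dfall lam x (k + 1) * dfall lam y (n - k) with hA
      set B := ∑ k ∈ Finset.range (n + 1),
        (n.choose k : ℝ) * dfall lam x k * dfall lam y (n + 1 - k) with hB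
      -- expand the target sum
      rw [Finset.sum_range_succ'
        (fun k => ((n + 1).choose k : ℝ) * dfall lam x k * dfall lam y (n + 1 - k)) (n + 1)]
      have hterm : ∀ k ∈ Finset.range (n + 1),
          ((n + 1).choose (k + 1) : ℝ) * dfall lam x (k + 1) * dfall lam y (n + 1 - (k + 1))
          = (n.choose k : ℝ) * dfall lam x (k + 1) * dfall lam y (n - k)
            + (n.choose (k + 1) : ℝ) * dfall lam x (k + 1) * dfall lam y (n - k) := by
        intro k _
        have h1 : n + 1 - (k + 1) = n - k := by omega
        rw [h1, Nat.choose_succ_succ n k]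
        push_cast
        ring
      rw [Finset.sum_congr rfl hterm, Finset.sum_add_distrib]
      have hC : ∑ k ∈ Finset.range (n + 1),
          (n.choose (k + 1) : ℝ) * dfall lam x (k + 1) * dfall lam y (n - k)
          + ((n + 1).choose 0 : ℝ) * dfall lam x 0 * dfall lam y (n + 1 - 0) = B := by
        rw [hB, Finset.sum_range_succ'
          (fun k => (n.choose k : ℝ) * dfall lam x k * dfall lam y (n + 1 - k)) n]
        rw [Finset.sum_range_succ]
        simp only [Nat.choose_succ_self, Nat.cast_zero, zero_mul, add_zero]
        congr 1
        apply Finset.sum_congr rfl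
        intro k hk
        rw [Finset.mem_range] at hk
        have : n + 1 - (k + 1) = n - k := by omega
        rw [this]
        simp
      rw [add_assoc, hC]

/-- Falling factorials (step 1) are linearly independent as functions. -/
lemma dfall_one_indep (N : ℕ) (a b : ℕ → ℝ)
    (h : ∀ y : ℝ, ∑ j ∈ Finset.range N, a j * dfall 1 y j
        = ∑ j ∈ Finset.range N, b j * dfall 1 y j) :
    ∀ j, j < N → a j = b j := by
  intro j
  induction j using Nat.strong_induction_on with
  | _ j ih =>
    intro hjN
    have hy := h (j : ℝ)
    have hzero : ∀ i, j < i → dfall 1 (j : ℝ) i = 0 := by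
      intro i hi
      apply Finset.prod_eq_zero (Finset.mem_range.mpr hi)
      simp
    have hsub : ∀ c : ℕ → ℝ, ∑ i ∈ Finset.range N, c i * dfall 1 (j : ℝ) i
        = ∑ i ∈ Finset.range (j + 1), c i * dfall 1 (j : ℝ) i := by
      intro c
      symm
      apply Finset.sum_subset
      · intro i hi
        rw [Finset.mem_range] at *
        omega
      · intro i _ hi
        rw [Finset.mem_range, not_lt] at hi
        rw [hzero i (by omega), mul_zero]
    rw [hsub a, hsub b, Finset.sum_range_succ, Finset.sum_range_succ] at hy
    have heq : ∑ i ∈ Finset.range j, a i * dfall 1 (j : ℝ) i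
        = ∑ i ∈ Finset.range j, b i * dfall 1 (j : ℝ) i := by
      apply Finset.sum_congr rfl
      intro i hi
      rw [Finset.mem_range] at hi
      rw [ih i hi (by omega)]
    rw [heq] at hy
    have hfac : dfall 1 (j : ℝ) j ≠ 0 := by
      apply ne_of_gt
      apply Finset.prod_pos
      intro i hi
      rw [Finset.mem_range] at hi
      have : (i : ℝ) < (j : ℝ) := by exact_mod_cast hi
      simpa using by linarith
    exact mul_right_cancel₀ hfac (add_left_cancel hy)

theorem stmt11 (lam : ℝ) (S : ℕ → ℕ → ℝ)
    (hS : ∀ (n : ℕ) (x : ℝ), dfall lam x n = ∑ k ∈ Finset.range (n + 1), S n k * dfall 1 x k)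
    (phi : ℕ → ℝ → ℝ)
    (hphi : ∀ (n : ℕ) (x : ℝ), phi n x = ∑ k ∈ Finset.range (n + 1), S n k * x ^ k) (n : ℕ) (x : ℝ) :
    x * phi n x = ∑ k ∈ Finset.range (n + 1),
      (n.choose k : ℝ) * dfall lam (lam - 1) (n - k) * phi (k + 1) x := by
  -- extend an inner sum over range (k+2) to range (n+2) using an indicator
  have hext : ∀ (k : ℕ), k < n + 1 → ∀ (g : ℕ → ℝ),
      ∑ j ∈ Finset.range (k + 2), S (k + 1) j * g j
      = ∑ j ∈ Finset.range (n + 2), (if j ≤ k + 1 then S (k + 1) j else 0) * g j := by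
    intro k hk g
    rw [← Finset.sum_subset (Finset.range_subset_range.mpr (by omega : k + 2 ≤ n + 2))
      (fun j _ hj => by
        rw [Finset.mem_range, not_lt] at hj
        rw [if_neg (by omega), zero_mul])]
    apply Finset.sum_congr rfl
    intro j hj
    rw [Finset.mem_range] at hj
    rw [if_pos (by omega)]
  -- the key coefficient identity
  have key : ∀ j, j < n + 2 →
      (∑ k ∈ Finset.range (n + 1), (n.choose k : ℝ) * dfall lam (lam - 1) (n - k) *
        (if j ≤ k + 1 then S (k + 1) j else 0))
      = (if j = 0 then 0 else S n (j - 1)) := by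
    apply dfall_one_indep (n + 2)
    intro y
    have lhs_eq : ∑ j ∈ Finset.range (n + 2),
        (∑ k ∈ Finset.range (n + 1), (n.choose k : ℝ) * dfall lam (lam - 1) (n - k) *
          (if j ≤ k + 1 then S (k + 1) j else 0)) * dfall 1 y j
        = y * dfall lam (y - 1) n := by
      have step1 : ∀ j ∈ Finset.range (n + 2),
          (∑ k ∈ Finset.range (n + 1), (n.choose k : ℝ) * dfall lam (lam - 1) (n - k) *
            (if j ≤ k + 1 then S (k + 1) j else 0)) * dfall 1 y j
          = ∑ k ∈ Finset.range (n + 1), (n.choose k : ℝ) * dfall lam (lam - 1) (n - k) *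
            ((if j ≤ k + 1 then S (k + 1) j else 0) * dfall 1 y j) := by
        intro j _
        rw [Finset.sum_mul]
        apply Finset.sum_congr rfl
        intro k _
        ring
      rw [Finset.sum_congr rfl step1, Finset.sum_comm]
      have step2 : ∀ k ∈ Finset.range (n + 1),
          ∑ j ∈ Finset.range (n + 2), (n.choose k : ℝ) * dfall lam (lam - 1) (n - k) *
            ((if j ≤ k + 1 then S (k + 1) j else 0) * dfall 1 y j)
          = (n.choose k : ℝ) * dfall lam (lam - 1) (n - k) * (y * dfall lam (y - lam) k) := by
        intro k hk
        rw [Finset.mem_range] at hk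
        rw [← Finset.mul_sum, ← hext k hk (fun j => dfall 1 y j), ← hS (k + 1) y,
          dfall_succ' lam y k]
      rw [Finset.sum_congr rfl step2]
      have step3 : ∑ k ∈ Finset.range (n + 1),
          (n.choose k : ℝ) * dfall lam (lam - 1) (n - k) * (y * dfall lam (y - lam) k)
          = y * ∑ k ∈ Finset.range (n + 1),
            (n.choose k : ℝ) * dfall lam (y - lam) k * dfall lam (lam - 1) (n - k) := by
        rw [Finset.mul_sum]
        apply Finset.sum_congr rfl
        intro k _
        ring
      rw [step3, ← dfall_vandermonde lam (y - lam) (lam - 1) n]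
      norm_num
    have rhs_eq : ∑ j ∈ Finset.range (n + 2),
        (if j = 0 then 0 else S n (j - 1)) * dfall 1 y j = y * dfall lam (y - 1) n := by
      rw [show (∑ j ∈ Finset.range (n + 2), (if j = 0 then 0 else S n (j - 1)) * dfall 1 y j)
          = (∑ j ∈ Finset.range (n + 1),
              (if j + 1 = 0 then 0 else S n (j + 1 - 1)) * dfall 1 y (j + 1))
            + (if (0 : ℕ) = 0 then (0 : ℝ) else S n (0 - 1)) * dfall 1 y 0 from
        Finset.sum_range_succ' _ (n + 1)]
      rw [if_pos rfl, zero_mul, add_zero]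
      have hterm : ∀ j ∈ Finset.range (n + 1),
          (if j + 1 = 0 then 0 else S n (j + 1 - 1)) * dfall 1 y (j + 1)
          = y * (S n j * dfall 1 (y - 1) j) := by
        intro j _
        rw [if_neg (Nat.succ_ne_zero j), Nat.add_sub_cancel, dfall_succ' 1 y j]
        ring
      rw [Finset.sum_congr rfl hterm, ← Finset.mul_sum, ← hS n (y - 1)]
    rw [lhs_eq, rhs_eq]
  -- now assemble the final identity
  rw [hphi n x, Finset.mul_sum]
  have lhsx : ∑ j ∈ Finset.range (n + 1), x * (S n j * x ^ j)
      = ∑ j ∈ Finset.range (n + 2), (if j = 0 then 0 else S n (j - 1)) * x ^ j := by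
    rw [show (∑ j ∈ Finset.range (n + 2), (if j = 0 then 0 else S n (j - 1)) * x ^ j)
        = (∑ j ∈ Finset.range (n + 1),
            (if j + 1 = 0 then 0 else S n (j + 1 - 1)) * x ^ (j + 1))
          + (if (0 : ℕ) = 0 then (0 : ℝ) else S n (0 - 1)) * x ^ (0 : ℕ) from
      Finset.sum_range_succ' _ (n + 1)]
    rw [if_pos rfl, zero_mul, add_zero]
    apply Finset.sum_congr rfl
    intro j _
    rw [if_neg (Nat.succ_ne_zero j), Nat.add_sub_cancel]
    ring
  rw [lhsx]
  have rhs_eq : ∑ k ∈ Finset.range (n + 1),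
      (n.choose k : ℝ) * dfall lam (lam - 1) (n - k) * phi (k + 1) x
      = ∑ j ∈ Finset.range (n + 2),
        (∑ k ∈ Finset.range (n + 1), (n.choose k : ℝ) * dfall lam (lam - 1) (n - k) *
          (if j ≤ k + 1 then S (k + 1) j else 0)) * x ^ j := by
    have step1 : ∀ k ∈ Finset.range (n + 1),
        (n.choose k : ℝ) * dfall lam (lam - 1) (n - k) * phi (k + 1) x
        = ∑ j ∈ Finset.range (n + 2), (n.choose k : ℝ) * dfall lam (lam - 1) (n - k) *
          ((if j ≤ k + 1 then S (k + 1) j else 0) * x ^ j) := by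
      intro k hk
      rw [Finset.mem_range] at hk
      rw [hphi (k + 1) x, hext k hk (fun j => x ^ j), Finset.mul_sum]
    rw [Finset.sum_congr rfl step1, Finset.sum_comm]
    apply Finset.sum_congr rfl
    intro j _
    rw [Finset.sum_mul]
    apply Finset.sum_congr rfl
    intro k _
    ring
  rw [rhs_eq]
  apply Finset.sum_congr rfl
  intro j hj
  rw [Finset.mem_range] at hj
  rw [key j hj]
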